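/- arXiv:2107.13158 — 6 statements merged into one kernel-verified Lean document; each statement's English description precedes it below -/
import Mathlib

section
/- In the semidirect product Γ_p = T^{p-1} ⋊_ρ C_p, for every t ∈ T^{p-1} the element t·a has order exactly p. -/
/-- Power formula in a semidirect product with abelian kernel. -/
lemma sdp_pow {N G : Type*} [CommGroup N] [Group G] (φ : G →* MulAut N)
    (t : N) (g : G) (n : ℕ) :
    (⟨t, g⟩ : SemidirectProduct N G φ) ^ n =
      ⟨∏ k ∈ Finset.range n, φ (g ^ k) t, g ^ n⟩ := by
  induction n with
  | zero => ext <;> simp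
  | succ n ih =>
    rw [pow_succ, ih]
    ext <;>
      simp [Finset.prod_range_succ, pow_succ, ← map_pow, SemidirectProduct.left_inr,
        SemidirectProduct.right_inr]

/-- In the semidirect product `Γ_p = T^{p-1} ⋊_ρ C_p`, where the generator
`a` of `C_p = Multiplicative (ZMod p)` acts on the torus `T^{p-1} = Fin (p-1) → Circle` by
`ρ(a)(t_1, …, t_{p-1}) = (t_{p-1}⁻¹, t_1 t_{p-1}⁻¹, …, t_{p-2} t_{p-1}⁻¹)`,
every element of the form `t·a` (`t ∈ T^{p-1}`) has order exactly `p`. -/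
theorem stmt_2 (p : ℕ) (hp : p.Prime)
    (φ : Multiplicative (ZMod p) →* MulAut (Fin (p - 1) → Circle))
    (hφ : ∀ (t : Fin (p - 1) → Circle) (i : Fin (p - 1)),
      φ (Multiplicative.ofAdd (1 : ZMod p)) t i =
        if (i : ℕ) = 0 then (t ⟨p - 2, by have := i.isLt; omega⟩)⁻¹
        else t ⟨(i : ℕ) - 1, by have := i.isLt; omega⟩ * (t ⟨p - 2, by have := i.isLt; omega⟩)⁻¹)
    (t : Fin (p - 1) → Circle) :
    orderOf (⟨t, Multiplicative.ofAdd (1 : ZMod p)⟩ :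
      SemidirectProduct (Fin (p - 1) → Circle) (Multiplicative (ZMod p)) φ) = p := by
  haveI : Fact p.Prime := ⟨hp⟩
  have hp2 : 2 ≤ p := hp.two_le
  set a : Multiplicative (ZMod p) := Multiplicative.ofAdd (1 : ZMod p) with ha
  set F : ZMod p → Circle := fun j => if h : j.val < p - 1 then t ⟨j.val, h⟩ else 1 with hF
  have hFt : ∀ i : Fin (p - 1), F ((i : ℕ) : ZMod p) = t i := by
    intro i
    have hi : (i : ℕ) < p := lt_of_lt_of_le i.isLt (Nat.sub_le p 1)
    have hv : (((i : ℕ) : ZMod p)).val = (i : ℕ) := ZMod.val_natCast_of_lt hi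
    simp only [hF, hv, dif_pos i.isLt]
  have hFneg : F (-1) = 1 := by
    have h1 : ((p - 1 : ℕ) : ZMod p) = -1 := by
      have : ((p - 1 : ℕ) : ZMod p) = (p : ZMod p) - 1 := by
        push_cast [Nat.cast_sub (by omega : 1 ≤ p)]; ring
      simp [this]
    have hv : ((-1 : ZMod p)).val = p - 1 := by
      rw [← h1, ZMod.val_natCast_of_lt (by omega)]
    simp [hF, hv]
  -- main formula for the k-th twist of t
  have key : ∀ (k : ℕ) (i : Fin (p - 1)),
      ((φ a ^ k) t) i = F (((i : ℕ) : ZMod p) - k) * (F (-1 - k))⁻¹ := by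
    intro k
    induction k with
    | zero => intro i; simp [hFt i, hFneg]
    | succ k ih =>
      intro i
      have hstep : ((φ a ^ (k + 1)) t) i = (φ a ((φ a ^ k) t)) i := by
        rw [pow_succ']; rfl
      rw [hstep, hφ ((φ a ^ k) t) i]
      have hcast2 : (((⟨p - 2, by omega⟩ : Fin (p - 1)) : ℕ) : ZMod p) = -2 := by
        show (((p - 2 : ℕ)) : ZMod p) = -2
        have : ((p - 2 : ℕ) : ZMod p) = (p : ZMod p) - 2 := by
          push_cast [Nat.cast_sub hp2]; ring
        simp [this]
      by_cases h0 : (i : ℕ) = 0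
      · rw [if_pos h0, ih ⟨p - 2, by omega⟩, hcast2]
        have hi0 : (((i : ℕ) : ZMod p)) = 0 := by rw [h0]; simp
        rw [hi0]
        push_cast
        have e1 : (0 : ZMod p) - ((k : ZMod p) + 1) = -1 - k := by ring
        have e2 : (-1 : ZMod p) - ((k : ZMod p) + 1) = -2 - k := by ring
        rw [e1, e2]
        group
      · rw [if_neg h0, ih ⟨p - 2, by omega⟩, ih ⟨(i : ℕ) - 1, by have := i.isLt; omega⟩,
          hcast2]
        have hcast1 : (((⟨(i : ℕ) - 1, by have := i.isLt; omega⟩ : Fin (p - 1)) : ℕ) : ZMod p)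
            = ((i : ℕ) : ZMod p) - 1 := by
          show (((i : ℕ) - 1 : ℕ) : ZMod p) = ((i : ℕ) : ZMod p) - 1
          push_cast [Nat.cast_sub (by omega : 1 ≤ (i : ℕ))]; ring
        rw [hcast1]
        push_cast
        have e1 : ((i : ℕ) : ZMod p) - 1 - (k : ZMod p)
            = ((i : ℕ) : ZMod p) - ((k : ZMod p) + 1) := by ring
        have e2 : (-1 : ZMod p) - ((k : ZMod p) + 1) = -2 - k := by ring
        rw [e1, e2]
        group
  -- summing over a full period
  have hsum : ∀ c : ZMod p, ∏ k ∈ Finset.range p, F (c - k) = ∏ j : ZMod p, F j := by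
    intro c
    refine Finset.prod_bij' (fun k _ => c - (k : ZMod p)) (fun j _ => (c - j).val)
      ?_ ?_ ?_ ?_ ?_
    · intro k hk; exact Finset.mem_univ _
    · intro j _; exact Finset.mem_range.mpr (ZMod.val_lt _)
    · intro k hk
      have h1 : ((c - (c - (k : ZMod p))).val) = ((k : ZMod p)).val := by
        congr 1; ring
      rw [h1]
      exact ZMod.val_natCast_of_lt (Finset.mem_range.mp hk)
    · intro j _
      have h1 : (((c - j).val : ZMod p)) = c - j := by
        simp [ZMod.natCast_val, ZMod.cast_id]
      rw [h1]; ring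
    · intro k _; rfl
  -- left component of x^p is trivial
  have hleft : ∏ k ∈ Finset.range p, φ (a ^ k) t = 1 := by
    funext i
    rw [Finset.prod_apply]
    have hc : ∀ k ∈ Finset.range p,
        (φ (a ^ k) t) i = F (((i : ℕ) : ZMod p) - k) * (F (-1 - k))⁻¹ := by
      intro k _
      rw [map_pow]
      exact key k i
    rw [Finset.prod_congr rfl hc, Finset.prod_mul_distrib]
    have h2 : ∏ x ∈ Finset.range p, (F (-1 - (x : ZMod p)))⁻¹
        = (∏ x ∈ Finset.range p, F (-1 - (x : ZMod p)))⁻¹ := by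
      rw [Finset.prod_inv_distrib]
    rw [h2, hsum, hsum]
    simp
  have hap : a ^ p = 1 := by
    rw [ha, ← ofAdd_nsmul]
    simp
  have hpow : (⟨t, a⟩ :
      SemidirectProduct (Fin (p - 1) → Circle) (Multiplicative (ZMod p)) φ) ^ p = 1 := by
    rw [sdp_pow, hleft, hap]
    rfl
  have hne : (⟨t, a⟩ :
      SemidirectProduct (Fin (p - 1) → Circle) (Multiplicative (ZMod p)) φ) ≠ 1 := by
    intro h
    have h2 : a = 1 := congrArg SemidirectProduct.rightHom h
    rw [ha] at h2
    have h1 : (1 : ZMod p) = (0 : ZMod p) := congrArg Multiplicative.toAdd h2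
    exact one_ne_zero h1
  exact orderOf_eq_prime hpow hne
end

section
/- Let G be a compact Lie group which is an extension 1 → T^n → G → C_p → 1 with non-trivial conjugation action of C_p on T^n. Then the fixed-point subgroup (T^n)^{C_p} of the conjugation action coincides with the centre Z(G) of G. -/
/-!
Since `T` is abelian, `C_G(T)` contains `T`. If a central element `z` were not in `T`, its image
would generate `G ⧸ T` (a group of prime order), so `G = ⟨z⟩ T ≤ C_G(T)` and the conjugation
action on `T` would be trivial. Hence `Z(G) ≤ T`, and a central element of `T` is exactly a
fixed point of the action.
-/

open Subgroup

lemma MulEquiv.isMulCommutative {M N : Type*} [Mul M] [CommMagma N] (e : M ≃* N) :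
    IsMulCommutative M :=
  .of_comm fun a b => e.injective <| by rw [map_mul, map_mul, mul_comm]

namespace QuotientGroup

variable {G : Type*} [Group G] {N : Subgroup G} [N.Normal]

lemma zpowers_sup_eq_top {z : G} (hz : zpowers (z : G ⧸ N) = ⊤) : zpowers z ⊔ N = ⊤ := by
  rw [← ker_mk' N, ← comap_map_eq, MonoidHom.map_zpowers, coe_mk', hz, comap_top]

lemma le_center_of_zpowers_mk_eq_top [IsMulCommutative N] {z : G} (hz : z ∈ center G)
    (hgen : zpowers (z : G ⧸ N) = ⊤) : N ≤ center G := by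
  have hzN : z ∈ centralizer (N : Set G) := fun n _ => mem_center_iff.mp hz n
  have : ⊤ ≤ centralizer (N : Set G) := by
    rw [← zpowers_sup_eq_top hgen]
    exact sup_le (zpowers_le.mpr hzN) (le_centralizer N)
  exact centralizer_eq_top_iff_subset.mp (top_le_iff.mp this)

lemma center_le_of_prime_card [IsMulCommutative N] (hp : (Nat.card (G ⧸ N)).Prime)
    (hN : ¬ N ≤ center G) : center G ≤ N := by
  intro z hz
  by_contra hzN
  have : Fact (Nat.card (G ⧸ N)).Prime := ⟨hp⟩
  have hz1 : (z : G ⧸ N) ≠ 1 := mt (eq_one_iff z).mp hzN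
  exact hN (le_center_of_zpowers_mk_eq_top hz (zpowers_eq_top_of_prime_card rfl hz1))

end QuotientGroup

theorem stmt_8_general (p n : ℕ) (hp : p.Prime)
    (G : Type*) [Group G]
    (T : Subgroup G) [T.Normal]
    (e : T ≃* (Fin n → Circle))
    (hcard : Nat.card (G ⧸ T) = p)
    (hnontriv : ¬ ∀ g : G, ∀ t ∈ T, g * t * g⁻¹ = t) :
    {t : G | t ∈ T ∧ ∀ g : G, g * t * g⁻¹ = t} = (Subgroup.center G : Set G) := by
  have : IsMulCommutative T := e.isMulCommutative
  have hconj {t : G} : (∀ g : G, g * t * g⁻¹ = t) ↔ t ∈ center G := by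
    simp only [mul_inv_eq_iff_eq_mul, mem_center_iff]
  have hTcenter : ¬ T ≤ center G := fun h => hnontriv fun g t ht => hconj.mpr (h ht) g
  have hcenterT := QuotientGroup.center_le_of_prime_card (hcard ▸ hp) hTcenter
  ext t
  simp only [Set.mem_ofPred_eq, SetLike.mem_coe, hconj]
  exact ⟨And.right, fun ht => ⟨hcenterT ht, ht⟩⟩

/-- Let `G` be a compact (Lie) group which is an extension
`1 → T^n → G → C_p → 1`: `T` is a closed normal subgroup, topologically isomorphic to
the `n`-torus `Fin n → Circle`, and `G ⧸ T` has prime order `p`.  Assume the conjugation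
action of `C_p` on `T^n` is non-trivial (some conjugation does not fix `T` pointwise).
Then the fixed-point subgroup `(T^n)^{C_p}` of the conjugation action — the set of
`t ∈ T` fixed by conjugation by every element of `G` (conjugation by elements of the
abelian `T` is automatically trivial on `T`) — coincides with the centre `Z(G)`. -/
theorem stmt_8 (p n : ℕ) (hp : p.Prime) (hn : 1 ≤ n)
    (G : Type*) [Group G] [TopologicalSpace G] [IsTopologicalGroup G] [CompactSpace G]
    (T : Subgroup G) [T.Normal] (hTclosed : IsClosed (T : Set G))
    (e : T ≃* (Fin n → Circle)) (he : Continuous e) (he' : Continuous e.symm)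
    (hcard : Nat.card (G ⧸ T) = p)
    (hnontriv : ¬ ∀ g : G, ∀ t ∈ T, g * t * g⁻¹ = t) :
    {t : G | t ∈ T ∧ ∀ g : G, g * t * g⁻¹ = t} = (Subgroup.center G : Set G) :=
  stmt_8_general p n hp G T e hcard hnontriv
end

section
/- Let I ⊆ ℤ[ξ_p] be a nonzero ideal, stable under multiplication by ξ_p. The inclusion I ↪ ℤ[ξ_p] induces a surjective C_p-equivariant homomorphism of tori (ℝ ⊗_ℤ I)/I → (ℝ ⊗_ℤ ℤ[ξ_p])/ℤ[ξ_p] with finite kernel; hence the corresponding semidirect products satisfy G_I / Ker ≅ G_{ℤ[ξ_p]} ≅ Γ_p, i.e., Γ_p is a quotient of G_I by a finite normal subgroup. -/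
/-!
Since `ℤ[ξ_p]` is a free `ℤ`-module of finite rank and `I ≠ 0`, the ideal `I` has finite index `n`,
so `n • ℤ[ξ_p] ⊆ I`. Hence the base change `ℝ ⊗ I → ℝ ⊗ ℤ[ξ_p]` of the inclusion is an
isomorphism: injective because `ℝ` is flat over `ℤ`, surjective because one may divide by `n`.
The induced map of tori is then surjective, and its kernel is the image of the finite group
`ℤ[ξ_p] / I` under `m ↦ [F⁻¹(1 ⊗ m)]`. Equivariance is functoriality of the torus construction;
as `C_p` is generated by `1`, the torus map intertwines the two actions and so extends, by the
identity on `C_p`, to the semidirect products.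
-/

open TensorProduct

/-- `ξ_p = exp(2πi/p)`. -/
noncomputable def zetaC (p : ℕ) : ℂ := Complex.exp (2 * Real.pi * Complex.I / p)

/-- The lattice `M ≤ ℝ ⊗_ℤ M`, i.e. the image of `x ↦ 1 ⊗ x`. -/
noncomputable def lattice (M : Type*) [AddCommGroup M] :
    AddSubgroup (ℝ ⊗[ℤ] M) :=
  (LinearMap.range ((TensorProduct.mk ℤ ℝ M) 1)).toAddSubgroup

section BaseChange

variable {K M N : Type*} [Field K] [CharZero K] [AddCommGroup M] [AddCommGroup N]

theorem LinearMap.baseChange_surjective_of_finiteIndex (f : N →ₗ[ℤ] M)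
    [(LinearMap.range f).toAddSubgroup.FiniteIndex] : Function.Surjective (f.baseChange K) := by
  set H := (LinearMap.range f).toAddSubgroup
  have hn : (H.index : K) ≠ 0 := Nat.cast_ne_zero.mpr AddSubgroup.FiniteIndex.index_ne_zero
  intro z
  induction z using TensorProduct.induction_on with
  | zero => exact ⟨0, map_zero _⟩
  | tmul s m =>
    obtain ⟨y, hy⟩ := H.nsmul_index_mem m
    refine ⟨(s / H.index) ⊗ₜ y, ?_⟩
    rw [baseChange_tmul, hy, ← natCast_zsmul, ← smul_tmul, zsmul_eq_mul, Int.cast_natCast,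
      mul_div_cancel₀ s hn]
  | add x y hx hy =>
    obtain ⟨x', rfl⟩ := hx
    obtain ⟨y', rfl⟩ := hy
    exact ⟨x' + y', map_add _ _ _⟩

theorem LinearMap.baseChange_bijective_of_finiteIndex (f : N →ₗ[ℤ] M) (hf : Function.Injective f)
    [(LinearMap.range f).toAddSubgroup.FiniteIndex] : Function.Bijective (f.baseChange K) :=
  ⟨by simpa [baseChange_eq_ltensor] using Module.Flat.lTensor_preserves_injective_linearMap f hf,
    f.baseChange_surjective_of_finiteIndex⟩

end BaseChange

section Torus

variable {M N P : Type*} [AddCommGroup M] [AddCommGroup N] [AddCommGroup P]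

theorem lattice_le_comap (f : N →ₗ[ℤ] M) :
    lattice N ≤ (lattice M).comap (f.baseChange ℝ).toAddMonoidHom := by
  rintro _ ⟨n, rfl⟩
  exact ⟨f n, by simp⟩

noncomputable def torusHom (f : N →ₗ[ℤ] M) : ℝ ⊗[ℤ] N ⧸ lattice N →+ ℝ ⊗[ℤ] M ⧸ lattice M :=
  QuotientAddGroup.map _ _ (f.baseChange ℝ).toAddMonoidHom (lattice_le_comap f)

theorem eq_torusHom {f : N →ₗ[ℤ] M} {φ : ℝ ⊗[ℤ] N ⧸ lattice N →+ ℝ ⊗[ℤ] M ⧸ lattice M}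
    (h : ∀ x, φ (QuotientAddGroup.mk' (lattice N) x) =
      QuotientAddGroup.mk' (lattice M) (f.baseChange ℝ x)) :
    φ = torusHom f :=
  QuotientAddGroup.addMonoidHom_ext _ (AddMonoidHom.ext h)

theorem torusHom_comp (g : M →ₗ[ℤ] P) (f : N →ₗ[ℤ] M) :
    torusHom (g ∘ₗ f) = (torusHom g).comp (torusHom f) :=
  (eq_torusHom fun x => by rw [LinearMap.baseChange_comp]; rfl).symm

theorem torusHom_surjective {f : N →ₗ[ℤ] M} (hf : Function.Surjective (f.baseChange ℝ)) :
    Function.Surjective (torusHom f) :=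
  QuotientAddGroup.map_surjective_of_surjective _ _ _ (QuotientAddGroup.mk_surjective.comp hf) _

theorem finite_setOf_torusHom_eq_zero (f : N →ₗ[ℤ] M) (hf : Function.Bijective (f.baseChange ℝ))
    [(LinearMap.range f).toAddSubgroup.FiniteIndex] : {x | torusHom f x = 0}.Finite := by
  let e := LinearEquiv.ofBijective (f.baseChange ℝ) hf
  let ψ : M →+ ℝ ⊗[ℤ] N ⧸ lattice N := (QuotientAddGroup.mk' (lattice N)).comp
    (e.symm.toAddMonoidHom.comp (TensorProduct.mk ℤ ℝ M 1).toAddMonoidHom)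
  have hψ : (LinearMap.range f).toAddSubgroup ≤ ψ.ker := by
    rintro _ ⟨n, rfl⟩
    have he : e.symm (1 ⊗ₜ f n) = 1 ⊗ₜ n := e.symm_apply_eq.mpr rfl
    show QuotientAddGroup.mk' _ (e.symm (1 ⊗ₜ f n)) = 0
    rw [he, QuotientAddGroup.mk'_apply, QuotientAddGroup.eq_zero_iff]
    exact ⟨n, rfl⟩
  refine (Set.finite_range (QuotientAddGroup.lift _ ψ hψ)).subset ?_
  intro t ht
  obtain ⟨x, rfl⟩ := QuotientAddGroup.mk_surjective t
  obtain ⟨m, hm⟩ := (QuotientAddGroup.eq_zero_iff _).mp ht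
  refine ⟨m, ?_⟩
  show QuotientAddGroup.mk' _ (e.symm (1 ⊗ₜ m)) = _
  rw [show (1 : ℝ) ⊗ₜ[ℤ] m = e x from hm, e.symm_apply_apply]
  rfl

end Torus

namespace SemidirectProduct

variable {N₁ G₁ N₂ G₂ : Type*} [Group N₁] [Group G₁] [Group N₂] [Group G₂]
  {φ₁ : G₁ →* MulAut N₁} {φ₂ : G₂ →* MulAut N₂} {fn : N₁ →* N₂} {fg : G₁ →* G₂}

theorem map_surjective
    (h : ∀ g : G₁, fn.comp (φ₁ g).toMonoidHom = (φ₂ (fg g)).toMonoidHom.comp fn)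
    (hn : Function.Surjective fn) (hg : Function.Surjective fg) :
    Function.Surjective (map fn fg h) := by
  rintro ⟨n, g⟩
  obtain ⟨n, rfl⟩ := hn n
  obtain ⟨g, rfl⟩ := hg g
  exact ⟨⟨n, g⟩, rfl⟩

theorem finite_setOf_map_eq_one
    (h : ∀ g : G₁, fn.comp (φ₁ g).toMonoidHom = (φ₂ (fg g)).toMonoidHom.comp fn)
    (hn : {n | fn n = 1}.Finite) (hg : {g | fg g = 1}.Finite) :
    {x | map fn fg h x = 1}.Finite := by
  refine ((hn.prod hg).image fun x => (⟨x.1, x.2⟩ : N₁ ⋊[φ₁] G₁)).subset ?_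
  rintro ⟨n, g⟩ hx
  exact ⟨(n, g), ⟨congrArg left hx, congrArg right hx⟩, rfl⟩

end SemidirectProduct

section Intertwining

variable {N₁ N₂ G : Type*} [Group N₁] [Group N₂] [Group G]

theorem MonoidHom.comp_zpow_eq_of_comp_eq (f : N₁ →* N₂) {σ : MulAut N₁} {τ : MulAut N₂}
    (h : f.comp σ.toMonoidHom = τ.toMonoidHom.comp f) (k : ℤ) :
    f.comp (σ ^ k).toMonoidHom = (τ ^ k).toMonoidHom.comp f := by
  have hσ (x : N₁) : f (σ x) = τ (f x) := DFunLike.congr_fun h x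
  have hσinv (x : N₁) : f (σ⁻¹ x) = τ⁻¹ (f x) :=
    τ.injective (by rw [← hσ, MulAut.apply_inv_self, MulAut.apply_inv_self])
  induction k using Int.induction_on with
  | zero => ext; simp
  | succ k ih =>
    ext x
    have hk := DFunLike.congr_fun ih (σ x)
    simp only [MonoidHom.comp_apply, MulEquiv.coe_toMonoidHom] at hk ⊢
    rw [zpow_add_one, zpow_add_one, MulAut.mul_apply, MulAut.mul_apply, hk, hσ]
  | pred k ih =>
    ext x
    have hk := DFunLike.congr_fun ih (σ⁻¹ x)
    simp only [MonoidHom.comp_apply, MulEquiv.coe_toMonoidHom] at hk ⊢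
    rw [zpow_sub_one, zpow_sub_one, MulAut.mul_apply, MulAut.mul_apply, hk, hσinv]

theorem comp_mulAut_eq_of_mem_zpowers {φ₁ : G →* MulAut N₁} {φ₂ : G →* MulAut N₂} {f : N₁ →* N₂}
    {g₀ : G} (h : f.comp (φ₁ g₀).toMonoidHom = (φ₂ g₀).toMonoidHom.comp f)
    {g : G} (hg : g ∈ Subgroup.zpowers g₀) :
    f.comp (φ₁ g).toMonoidHom = (φ₂ g).toMonoidHom.comp f := by
  obtain ⟨k, rfl⟩ := Subgroup.mem_zpowers_iff.mp hg
  rw [map_zpow, map_zpow]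
  exact f.comp_zpow_eq_of_comp_eq h k

end Intertwining

theorem ZMod.mem_zpowers_ofAdd_one {n : ℕ} (g : Multiplicative (ZMod n)) :
    g ∈ Subgroup.zpowers (Multiplicative.ofAdd 1) := by
  obtain ⟨k, hk⟩ := ZMod.intCast_surjective (Multiplicative.toAdd g)
  exact ⟨k, show _ ^ k = g by rw [← ofAdd_zsmul, zsmul_one, hk]; rfl⟩

theorem isIntegral_zetaC (p : ℕ) : IsIntegral ℤ (zetaC p) := by
  rcases Nat.eq_zero_or_pos p with rfl | hp
  · simpa [zetaC] using isIntegral_one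
  · exact (Complex.isPrimitiveRoot_exp p hp.ne').isIntegral hp

theorem Module.Finite.of_injective_ringHom_adjoin {R A : Type*} [CommRing R] [CommRing A]
    (ι : R →+* A) (hι : Function.Injective ι) {x : A} (hx : IsIntegral ℤ x)
    (hrange : Set.range ι ⊆ Algebra.adjoin ℤ {x}) : Module.Finite ℤ R :=
  have : Module.Finite ℤ (Algebra.adjoin ℤ {x}) := Module.Finite.iff_fg.mpr hx.fg_adjoin_singleton
  .of_injective (ι.toIntAlgHom.toLinearMap.codRestrict (Algebra.adjoin ℤ {x}).toSubmodule
    fun r => hrange ⟨r, rfl⟩) fun _ _ hab => hι (congrArg Subtype.val hab)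

theorem Ideal.finiteIndex_of_injective_ringHom_adjoin {R A : Type*} [CommRing R] [CommRing A]
    [IsDomain A] [CharZero A] (ι : R →+* A) (hι : Function.Injective ι) {x : A}
    (hx : IsIntegral ℤ x) (hrange : Set.range ι ⊆ Algebra.adjoin ℤ {x}) {I : Ideal R}
    (hI : I ≠ ⊥) : I.toAddSubgroup.FiniteIndex :=
  have : IsDomain R := hι.isDomain ι
  have : CharZero R := (RingHom.charZero_iff hι).mpr inferInstance
  have : Module.Finite ℤ R := .of_injective_ringHom_adjoin ι hι hx hrange
  have : Module.Free ℤ R := Module.free_of_finite_type_torsion_free'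
  @AddSubgroup.finiteIndex_of_finite_quotient _ _ _ (Ideal.finiteQuotientOfFreeOfNeBot I hI)

theorem stmt_12_general (p : ℕ)
    (R : Type) [CommRing R] (ι : R →+* ℂ) (hι : Function.Injective ι)
    (hrange : Set.range ι = (Algebra.adjoin ℤ ({zetaC p} : Set ℂ) : Set ℂ))
    (ζR : R)
    (I : Ideal R) (hI : I ≠ ⊥)
    (F : (ℝ ⊗[ℤ] I) →ₗ[ℝ] (ℝ ⊗[ℤ] R))
    (hF : F = LinearMap.baseChange ℝ ((Submodule.subtype I).restrictScalars ℤ))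
    (mI : I →ₗ[ℤ] I) (hmI : mI = ((LinearMap.lsmul R I) ζR).restrictScalars ℤ)
    (mR : R →ₗ[ℤ] R) (hmR : mR = ((LinearMap.lsmul R R) ζR).restrictScalars ℤ)
    (fbar : (ℝ ⊗[ℤ] I) ⧸ lattice I →+ (ℝ ⊗[ℤ] R) ⧸ lattice R)
    (hfbar : ∀ x : ℝ ⊗[ℤ] I,
      fbar (QuotientAddGroup.mk' (lattice I) x) = QuotientAddGroup.mk' (lattice R) (F x))
    (μI : (ℝ ⊗[ℤ] I) ⧸ lattice I →+ (ℝ ⊗[ℤ] I) ⧸ lattice I)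
    (hμI : ∀ x : ℝ ⊗[ℤ] I,
      μI (QuotientAddGroup.mk' (lattice I) x) =
        QuotientAddGroup.mk' (lattice I) (LinearMap.baseChange ℝ mI x))
    (μR : (ℝ ⊗[ℤ] R) ⧸ lattice R →+ (ℝ ⊗[ℤ] R) ⧸ lattice R)
    (hμR : ∀ y : ℝ ⊗[ℤ] R,
      μR (QuotientAddGroup.mk' (lattice R) y) =
        QuotientAddGroup.mk' (lattice R) (LinearMap.baseChange ℝ mR y))
    (φI : Multiplicative (ZMod p) →* MulAut (Multiplicative ((ℝ ⊗[ℤ] I) ⧸ lattice I)))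
    (hφI : ∀ x, Multiplicative.toAdd (φI (Multiplicative.ofAdd (1 : ZMod p)) x) =
      μI (Multiplicative.toAdd x))
    (φR : Multiplicative (ZMod p) →* MulAut (Multiplicative ((ℝ ⊗[ℤ] R) ⧸ lattice R)))
    (hφR : ∀ y, Multiplicative.toAdd (φR (Multiplicative.ofAdd (1 : ZMod p)) y) =
      μR (Multiplicative.toAdd y)) :
    Function.Surjective fbar
    ∧ Set.Finite {x | fbar x = 0}
    ∧ (∀ x, fbar (μI x) = μR (fbar x))
    ∧ ∃ q : SemidirectProduct (Multiplicative ((ℝ ⊗[ℤ] I) ⧸ lattice I))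
          (Multiplicative (ZMod p)) φI →*
        SemidirectProduct (Multiplicative ((ℝ ⊗[ℤ] R) ⧸ lattice R))
          (Multiplicative (ZMod p)) φR,
        Function.Surjective q ∧ Set.Finite {g | q g = 1} ∧
          (∀ g, (q g).right = g.right) ∧
          (∀ g, Multiplicative.toAdd (q g).left = fbar (Multiplicative.toAdd g.left)) := by
  subst hF
  obtain rfl := eq_torusHom hfbar
  obtain rfl := eq_torusHom hμI
  obtain rfl := eq_torusHom hμR
  set f := (Submodule.subtype I).restrictScalars ℤ
  have : (LinearMap.range f).toAddSubgroup.FiniteIndex := by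
    rw [show (LinearMap.range f).toAddSubgroup = I.toAddSubgroup by ext; simp [f]]
    exact I.finiteIndex_of_injective_ringHom_adjoin ι hι (isIntegral_zetaC p) hrange.le hI
  have hf := f.baseChange_bijective_of_finiteIndex (K := ℝ) Subtype.val_injective
  have hcomm (x) : torusHom f (torusHom mI x) = torusHom mR (torusHom f x) := by
    have hfm : f ∘ₗ mI = mR ∘ₗ f := by subst hmI hmR; rfl
    rw [← AddMonoidHom.comp_apply, ← torusHom_comp, hfm, torusHom_comp, AddMonoidHom.comp_apply]
  let fbarMul := AddMonoidHom.toMultiplicative (torusHom f)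
  have hφ (g : Multiplicative (ZMod p)) :
      fbarMul.comp (φI g).toMonoidHom = (φR g).toMonoidHom.comp fbarMul := by
    refine comp_mulAut_eq_of_mem_zpowers ?_ (ZMod.mem_zpowers_ofAdd_one g)
    refine MonoidHom.ext fun x => Multiplicative.toAdd.injective ?_
    show torusHom f (Multiplicative.toAdd (φI _ x)) = Multiplicative.toAdd (φR _ (fbarMul x))
    rw [hφI, hφR, hcomm]
    rfl
  refine ⟨torusHom_surjective hf.2, finite_setOf_torusHom_eq_zero f hf, hcomm,
    SemidirectProduct.map fbarMul (MonoidHom.id _) hφ,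
    SemidirectProduct.map_surjective hφ (torusHom_surjective hf.2) Function.surjective_id,
    SemidirectProduct.finite_setOf_map_eq_one hφ ?_ ?_, fun _ => rfl, fun _ => rfl⟩
  · exact (finite_setOf_torusHom_eq_zero f hf).preimage Multiplicative.toAdd.injective.injOn
  · exact (Set.finite_singleton 1).subset fun _ => id

/-- Let `R ≅ ℤ[ξ_p]` be the ring of integers of the `p`-th cyclotomic field
(a commutative ring with an injective ring homomorphism `ι` onto the subring
`ℤ[ξ_p] = Algebra.adjoin ℤ {ξ_p}` of `ℂ`, with `ζR` corresponding to `ξ_p`), and let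
`I ⊆ R` be a nonzero ideal (automatically stable under multiplication by `ξ_p`).
Let `fbar : (ℝ ⊗_ℤ I)/I → (ℝ ⊗_ℤ R)/R` be the map of tori induced by the inclusion
`I ↪ R` (hypothesis `hfbar`, with `F` the base change of the inclusion to `ℝ`), and let
`μI, μR` be the maps of the tori induced by multiplication by `ξ_p` (the action of the
generator of `C_p`; hypotheses `hμI`, `hμR`).  Then `fbar` is surjective, has finite
kernel, and is `C_p`-equivariant; hence for the corresponding semidirect products
`G_I = T_I ⋊ C_p` and `G_R = T_R ⋊ C_p ≅ Γ_p` (with `C_p` acting through `μI` resp.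
`μR`; hypotheses `hφI`, `hφR`) there is a surjective homomorphism `q : G_I → G_R ≅ Γ_p`
with finite kernel, extending `fbar` and inducing the identity on `C_p`: `Γ_p` is the
quotient of `G_I` by the finite normal subgroup `Ker q`. -/
theorem stmt_12 (p : ℕ) (hp : p.Prime)
    (R : Type) [CommRing R] (ι : R →+* ℂ) (hι : Function.Injective ι)
    (hrange : Set.range ι = (Algebra.adjoin ℤ ({zetaC p} : Set ℂ) : Set ℂ))
    (ζR : R) (hζ : ι ζR = zetaC p)
    (I : Ideal R) (hI : I ≠ ⊥)
    (F : (ℝ ⊗[ℤ] I) →ₗ[ℝ] (ℝ ⊗[ℤ] R))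
    (hF : F = LinearMap.baseChange ℝ ((Submodule.subtype I).restrictScalars ℤ))
    (mI : I →ₗ[ℤ] I) (hmI : mI = ((LinearMap.lsmul R I) ζR).restrictScalars ℤ)
    (mR : R →ₗ[ℤ] R) (hmR : mR = ((LinearMap.lsmul R R) ζR).restrictScalars ℤ)
    (fbar : (ℝ ⊗[ℤ] I) ⧸ lattice I →+ (ℝ ⊗[ℤ] R) ⧸ lattice R)
    (hfbar : ∀ x : ℝ ⊗[ℤ] I,
      fbar (QuotientAddGroup.mk' (lattice I) x) = QuotientAddGroup.mk' (lattice R) (F x))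
    (μI : (ℝ ⊗[ℤ] I) ⧸ lattice I →+ (ℝ ⊗[ℤ] I) ⧸ lattice I)
    (hμI : ∀ x : ℝ ⊗[ℤ] I,
      μI (QuotientAddGroup.mk' (lattice I) x) =
        QuotientAddGroup.mk' (lattice I) (LinearMap.baseChange ℝ mI x))
    (μR : (ℝ ⊗[ℤ] R) ⧸ lattice R →+ (ℝ ⊗[ℤ] R) ⧸ lattice R)
    (hμR : ∀ y : ℝ ⊗[ℤ] R,
      μR (QuotientAddGroup.mk' (lattice R) y) =
        QuotientAddGroup.mk' (lattice R) (LinearMap.baseChange ℝ mR y))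
    (φI : Multiplicative (ZMod p) →* MulAut (Multiplicative ((ℝ ⊗[ℤ] I) ⧸ lattice I)))
    (hφI : ∀ x, Multiplicative.toAdd (φI (Multiplicative.ofAdd (1 : ZMod p)) x) =
      μI (Multiplicative.toAdd x))
    (φR : Multiplicative (ZMod p) →* MulAut (Multiplicative ((ℝ ⊗[ℤ] R) ⧸ lattice R)))
    (hφR : ∀ y, Multiplicative.toAdd (φR (Multiplicative.ofAdd (1 : ZMod p)) y) =
      μR (Multiplicative.toAdd y)) :
    Function.Surjective fbar
    ∧ Set.Finite {x | fbar x = 0}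
    ∧ (∀ x, fbar (μI x) = μR (fbar x))
    ∧ ∃ q : SemidirectProduct (Multiplicative ((ℝ ⊗[ℤ] I) ⧸ lattice I))
          (Multiplicative (ZMod p)) φI →*
        SemidirectProduct (Multiplicative ((ℝ ⊗[ℤ] R) ⧸ lattice R))
          (Multiplicative (ZMod p)) φR,
        Function.Surjective q ∧ Set.Finite {g | q g = 1} ∧
          (∀ g, (q g).right = g.right) ∧
          (∀ g, Multiplicative.toAdd (q g).left = fbar (Multiplicative.toAdd g.left)) :=
  stmt_12_general p R ι hι hrange ζR I hI F hF mI hmI mR hmR fbar hfbar μI hμI μR hμR φI hφI φR hφR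
end

section
/- Let G be a compact Lie group, and define G to be a BU-group of type I if for all fixed-point-free orthogonal G-representations V, W, the existence of a G-equivariant map S(V) → S(W) implies dim V ≤ dim W; and of type II if for all such V, W of equal dimension, every G-map S(V) → S(W) has nonzero degree. If G is not a BU-group of type I, then G is not a BU-group of type II. -/
/-- A (finite-dimensional) orthogonal representation of a (compact Lie) group `G`:
a finite-dimensional real inner product space with `G` acting by linear isometries. -/
structure OrthRep (G : Type) [Group G] where
  V : Type
  [nacg : NormedAddCommGroup V]
  [ips : InnerProductSpace ℝ V]
  [fd : FiniteDimensional ℝ V]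
  ρ : G →* (V ≃ₗᵢ[ℝ] V)

attribute [instance] OrthRep.nacg OrthRep.ips OrthRep.fd

/-- A representation is fixed-point-free if `V^G = 0`. -/
def OrthRep.FixedPointFree {G : Type} [Group G] (R : OrthRep G) : Prop :=
  ∀ v : R.V, (∀ g : G, R.ρ g v = v) → v = 0

/-- A `G`-map between the unit spheres `S(V) → S(W)`: a continuous map sending the unit
sphere to the unit sphere, equivariantly. (Only its values on the unit sphere matter.) -/
def IsEquivSphereMap {G : Type} [Group G] (R S : OrthRep G) (f : R.V → S.V) : Prop :=
  Continuous f ∧ (∀ v : R.V, ‖v‖ = 1 → ‖f v‖ = 1) ∧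
    ∀ (g : G) (v : R.V), ‖v‖ = 1 → f (R.ρ g v) = S.ρ g (f v)

/-- `G` is a BU-group of type I: for all fixed-point-free orthogonal `G`-representations
`V, W`, the existence of a `G`-map `S(V) → S(W)` implies `dim V ≤ dim W`. -/
def BUTypeI (G : Type) [Group G] : Prop :=
  ∀ R S : OrthRep G, R.FixedPointFree → S.FixedPointFree →
    (∃ f : R.V → S.V, IsEquivSphereMap R S f) →
      Module.finrank ℝ R.V ≤ Module.finrank ℝ S.V

/-- `G` is a BU-group of type II (relative to a mapping-degree assignment `deg`):
every `G`-map between unit spheres of fixed-point-free representations of equal dimension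
has nonzero degree. -/
def BUTypeII (G : Type) [Group G]
    (deg : ∀ R S : OrthRep G, ∀ f : R.V → S.V, IsEquivSphereMap R S f → ℤ) : Prop :=
  ∀ (R S : OrthRep G) (f : R.V → S.V) (hf : IsEquivSphereMap R S f),
    R.FixedPointFree → S.FixedPointFree →
      Module.finrank ℝ R.V = Module.finrank ℝ S.V → deg R S f hf ≠ 0

/-!
If `f : S(V) → S(W)` is a `G`-map with `m = dim W < dim V = n`, coning `f` to a map
`V → W` and applying it in each of `m` coordinates gives a `G`-map `S(V^m) → S(W^m)`, the
`m`-fold join of `f`. Composed with the inclusion `W^m ⊆ W^n` it becomes a `G`-map between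
spheres of the same dimension `mn` whose image lies in `S(W^m)`, so it misses every unit vector
supported on the extra coordinates and has degree `0`.
-/

open Function Module

section RadialExtension

variable {E : Type*} [NormedAddCommGroup E] [NormedSpace ℝ E]

theorem norm_inv_norm_smul {v : E} (hv : v ≠ 0) : ‖‖v‖⁻¹ • v‖ = 1 := by
  simpa using norm_smul_inv_norm (𝕜 := ℝ) hv

variable {F : Type*} [NormedAddCommGroup F] [NormedSpace ℝ F] {f : E → F}

-- At `v = 0` this is `0 • f 0 = 0`.
noncomputable def radialExtension (f : E → F) (v : E) : F :=
  ‖v‖ • f (‖v‖⁻¹ • v)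

theorem norm_radialExtension (hf : ∀ v, ‖v‖ = 1 → ‖f v‖ = 1) (v : E) :
    ‖radialExtension f v‖ = ‖v‖ := by
  rcases eq_or_ne v 0 with rfl | hv
  · simp [radialExtension]
  · rw [radialExtension, norm_smul, hf _ (norm_inv_norm_smul hv), norm_norm, mul_one]

theorem continuous_radialExtension (hfc : Continuous f)
    (hf : ∀ v, ‖v‖ = 1 → ‖f v‖ = 1) :
    Continuous (radialExtension f) := by
  refine continuous_iff_continuousAt.2 fun v => ?_
  rcases eq_or_ne v 0 with rfl | hv
  · rw [ContinuousAt, show radialExtension f 0 = 0 by simp [radialExtension]]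
    exact squeeze_zero_norm (fun w => (norm_radialExtension hf w).le) tendsto_norm_zero
  · exact continuous_norm.continuousAt.smul <| hfc.continuousAt.comp <|
      (continuous_norm.continuousAt.inv₀ (norm_ne_zero_iff.2 hv)).smul continuousAt_id

theorem radialExtension_map (A : E ≃ₗᵢ[ℝ] E) (B : F ≃ₗᵢ[ℝ] F)
    (h : ∀ v, ‖v‖ = 1 → f (A v) = B (f v)) (v : E) :
    radialExtension f (A v) = B (radialExtension f v) := by
  rcases eq_or_ne v 0 with rfl | hv
  · simp [radialExtension]
  · rw [radialExtension, radialExtension, A.norm_map, ← A.map_smul,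
      h _ (norm_inv_norm_smul hv), B.map_smul]

end RadialExtension

section ExtendByZero

variable {E F ι κ : Type*} {e : ι → κ} {φ : E → F}

noncomputable def piLpExtendByZero [Zero F] (e : ι → κ) (φ : E → F)
    (v : PiLp 2 fun _ : ι => E) : PiLp 2 fun _ : κ => F :=
  WithLp.toLp 2 (extend e (fun i => φ (v i)) 0)

theorem continuous_piLpExtendByZero [NormedAddCommGroup E] [NormedAddCommGroup F]
    [Fintype ι] [Fintype κ] (hφ : Continuous φ) :
    Continuous (piLpExtendByZero e φ) := by
  classical
  refine (PiLp.continuous_toLp 2 _).comp (continuous_pi fun j => ?_)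
  simp only [extend_def]
  split
  · exact hφ.comp ((continuous_apply _).comp (PiLp.continuous_ofLp 2 _))
  · exact continuous_const

theorem norm_piLpExtendByZero [NormedAddCommGroup E] [NormedAddCommGroup F]
    [Fintype ι] [Fintype κ] (he : Injective e) (hφ : ∀ x, ‖φ x‖ = ‖x‖)
    (v : PiLp 2 fun _ : ι => E) : ‖piLpExtendByZero e φ v‖ = ‖v‖ := by
  rw [PiLp.norm_eq_of_L2, PiLp.norm_eq_of_L2]
  congr 1
  refine (Fintype.sum_of_injective e he _ _ (fun j hj => ?_) fun i => ?_).symm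
  · simp [piLpExtendByZero, extend_apply' _ _ _ (by simpa using hj)]
  · simp [piLpExtendByZero, he.extend_apply, hφ]

theorem piLpExtendByZero_piLpCongrRight [NormedAddCommGroup E] [NormedAddCommGroup F]
    [NormedSpace ℝ E] [NormedSpace ℝ F] [Fintype ι] [Fintype κ]
    (A : E ≃ₗᵢ[ℝ] E) (B : F ≃ₗᵢ[ℝ] F) (h : ∀ x, φ (A x) = B (φ x))
    (v : PiLp 2 fun _ : ι => E) :
    piLpExtendByZero e φ (LinearIsometryEquiv.piLpCongrRight 2 (fun _ => A) v) =
      LinearIsometryEquiv.piLpCongrRight 2 (fun _ => B) (piLpExtendByZero e φ v) := by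
  classical
  ext j
  simp only [piLpExtendByZero, LinearIsometryEquiv.piLpCongrRight_apply, extend_def]
  split_ifs <;> simp [h]

theorem piLpExtendByZero_ne_single [Zero F] [DecidableEq κ] {j : κ} (hj : j ∉ Set.range e)
    {w : F} (hw : w ≠ 0) (v : PiLp 2 fun _ : ι => E) :
    piLpExtendByZero e φ v ≠ PiLp.single 2 j w := by
  intro h
  have := congr_arg (· j) h
  simp [piLpExtendByZero, extend_apply' _ _ _ (by simpa using hj)] at this
  exact hw this.symm

end ExtendByZero

namespace OrthRep

variable {G : Type} [Group G]

noncomputable abbrev pi (R : OrthRep G) (ι : Type) [Fintype ι] : OrthRep G where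
  V := PiLp 2 fun _ : ι => R.V
  ρ :=
    { toFun g := LinearIsometryEquiv.piLpCongrRight 2 fun _ => R.ρ g
      map_one' := by ext; simp
      map_mul' _ _ := by ext; simp }

theorem finrank_pi (R : OrthRep G) (ι : Type) [Fintype ι] :
    finrank ℝ (R.pi ι).V = Fintype.card ι * finrank ℝ R.V := by
  simp [(WithLp.linearEquiv 2 ℝ (ι → R.V)).finrank_eq, finrank_pi_fintype]

theorem FixedPointFree.pi {R : OrthRep G} (hR : R.FixedPointFree) (ι : Type) [Fintype ι] :
    (R.pi ι).FixedPointFree :=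
  fun v hv => PiLp.ext fun i => hR (v i) fun g => congr_arg (· i) (hv g)

end OrthRep

theorem IsEquivSphereMap.piLpExtendByZero_radialExtension {G : Type} [Group G]
    {R S : OrthRep G} {f : R.V → S.V} (hf : IsEquivSphereMap R S f)
    {ι κ : Type} [Fintype ι] [Fintype κ] {e : ι → κ} (he : Injective e) :
    IsEquivSphereMap (R.pi ι) (S.pi κ) (piLpExtendByZero e (radialExtension f)) := by
  obtain ⟨hc, h1, hG⟩ := hf
  exact ⟨continuous_piLpExtendByZero (continuous_radialExtension hc h1),
    fun v hv => by rw [norm_piLpExtendByZero he (norm_radialExtension h1), hv],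
    fun g v _ => piLpExtendByZero_piLpCongrRight _ _ (radialExtension_map _ _ (hG g)) v⟩

/-- If `G` is not a BU-group of type I, then `G` is not a BU-group of
type II.  Here `deg` is any assignment of mapping degrees to `G`-maps between
equal-dimensional spheres satisfying the basic property of the topological degree that a
non-surjective map (one missing a point of the target sphere) has degree `0`. -/
theorem stmt_13 (G : Type) [Group G]
    (deg : ∀ R S : OrthRep G, ∀ f : R.V → S.V, IsEquivSphereMap R S f → ℤ)
    (hdeg : ∀ (R S : OrthRep G) (f : R.V → S.V) (hf : IsEquivSphereMap R S f),
      Module.finrank ℝ R.V = Module.finrank ℝ S.V →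
      (∃ w : S.V, ‖w‖ = 1 ∧ ∀ v : R.V, ‖v‖ = 1 → f v ≠ w) → deg R S f hf = 0)
    (h : ¬ BUTypeI G) :
    ¬ BUTypeII G deg := by
  intro hII
  obtain ⟨R, S, hR, hS, ⟨f, hf⟩, hlt⟩ : ∃ R S : OrthRep G,
      R.FixedPointFree ∧ S.FixedPointFree ∧ (∃ f, IsEquivSphereMap R S f) ∧
        finrank ℝ S.V < finrank ℝ R.V := by
    simpa [BUTypeI] using h
  set m := finrank ℝ S.V
  set n := finrank ℝ R.V
  have : Nontrivial R.V := finrank_pos_iff (R := ℝ) |>.mp (by omega)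
  obtain ⟨v, hv⟩ := exists_norm_eq R.V zero_le_one
  have hfv : ‖f v‖ = 1 := hf.2.1 v hv
  let F := piLpExtendByZero (Fin.castLE hlt.le) (radialExtension f)
  have hF : IsEquivSphereMap (R.pi (Fin m)) (S.pi (Fin n)) F :=
    hf.piLpExtendByZero_radialExtension (Fin.castLE_injective _)
  have hdim : finrank ℝ (R.pi (Fin m)).V = finrank ℝ (S.pi (Fin n)).V := by
    rw [OrthRep.finrank_pi, OrthRep.finrank_pi, Fintype.card_fin, Fintype.card_fin, mul_comm]
  have hm : (⟨m, hlt⟩ : Fin n) ∉ Set.range (Fin.castLE hlt.le) := by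
    rintro ⟨i, hi⟩
    exact i.isLt.ne (congr_arg Fin.val hi)
  refine hII _ _ F hF (hR.pi _) (hS.pi _) hdim (hdeg _ _ F hF hdim
    ⟨PiLp.single 2 _ (f v), ?_, fun u _ => piLpExtendByZero_ne_single hm ?_ u⟩)
  · rw [PiLp.norm_single, hfv]
  · exact norm_ne_zero_iff.mp (hfv ▸ one_ne_zero)
end

section
/- Let p be a prime and H a nontrivial closed subgroup of T^{p-1} ≤ Γ_p. Then dim_ℝ U_1^H ≤ dim_ℝ U_p^H, where U_k = Ind_{T^{p-1}}^{Γ_p} of the character t ↦ t_1^k. Specifically, dim_ℝ U_p^H = dim_ℝ U_1^{H^p} ≥ dim_ℝ U_1^H, where H^p = {t^p : t ∈ H}. -/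
/-- The character of the torus `T^{p-1} = Fin (p-1) → Circle` by which `t ∈ T^{p-1}` acts
on the `i`-th coordinate of `U_k = Ind_{T^{p-1}}^{Γ_p}(t ↦ t_1^k) ≅ (Fin p → ℂ)`:
by formula (3.2) of the paper,
`t · (z_0, …, z_{p-1}) = (t_1^k z_0, t_1^{-k} t_2^k z_1, …, t_{p-2}^{-k} t_{p-1}^k z_{p-2}, t_{p-1}^{-k} z_{p-1})`. -/
noncomputable def chiU (p : ℕ) (hp : 1 < p) (k : ℤ) (i : Fin p)
    (t : Fin (p - 1) → Circle) : Circle :=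
  if h0 : (i : ℕ) = 0 then (t ⟨0, by omega⟩) ^ k
  else if hl : (i : ℕ) = p - 1 then (t ⟨p - 2, by omega⟩) ^ (-k)
  else (t ⟨(i : ℕ) - 1, by have := i.isLt; omega⟩) ^ (-k) *
    (t ⟨(i : ℕ), by have := i.isLt; omega⟩) ^ k

/-- The action of `t ∈ T^{p-1}` on `U_k ≅ (Fin p → ℂ)`, as a real-linear map:
coordinatewise multiplication by the characters `chiU`. -/
noncomputable def actU (p : ℕ) (hp : 1 < p) (k : ℤ) (t : Fin (p - 1) → Circle) :
    (Fin p → ℂ) →ₗ[ℝ] (Fin p → ℂ) :=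
  LinearMap.pi fun i => ((chiU p hp k i t : ℂ)) • LinearMap.proj i

/-- The fixed-point subspace `U_k^H` for a subgroup `H ≤ T^{p-1}`. -/
noncomputable def fixU (p : ℕ) (hp : 1 < p) (k : ℤ)
    (H : Subgroup (Fin (p - 1) → Circle)) : Submodule ℝ (Fin p → ℂ) :=
  ⨅ t ∈ H, LinearMap.ker (actU p hp k t - LinearMap.id)

/-! The character `t ↦ t_1^p` is the character `t ↦ t_1` composed with `t ↦ t^p`, so `U_p` is the
pull-back of `U_1` along the `p`-th power map of the torus and `U_p^H = U_1^{H^p}`. Since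
`H^p ≤ H`, fixing `H^p` is a weaker condition than fixing `H`, whence `U_1^H ≤ U_1^{H^p}`. -/

section

variable {p : ℕ} (hp : 1 < p)

lemma chiU_natCast (n : ℕ) (i : Fin p) (t : Fin (p - 1) → Circle) :
    chiU p hp n i t = chiU p hp 1 i (t ^ n) := by
  unfold chiU
  split_ifs <;> simp [Pi.pow_apply, zpow_neg, zpow_natCast]

lemma actU_natCast (n : ℕ) (t : Fin (p - 1) → Circle) :
    actU p hp n t = actU p hp 1 (t ^ n) := by
  simp only [actU, chiU_natCast]

lemma fixU_antitone (k : ℤ) : Antitone (fixU p hp k) := fun _ _ hH =>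
  iInf₂_mono' fun t ht => ⟨t, hH ht, le_rfl⟩

lemma fixU_natCast (n : ℕ) (H : Subgroup (Fin (p - 1) → Circle)) :
    fixU p hp n H = fixU p hp 1 (H.map (powMonoidHom n)) := by
  apply le_antisymm
  · refine le_iInf₂ fun s ⟨t, ht, hts⟩ => ?_
    rw [← hts, powMonoidHom_apply, ← actU_natCast]
    exact iInf₂_le t ht
  · refine le_iInf₂ fun t ht => ?_
    rw [actU_natCast]
    exact iInf₂_le (t ^ n) ⟨t, ht, rfl⟩

end

lemma Subgroup.map_powMonoidHom_le {G : Type*} [CommGroup G] (H : Subgroup G) (n : ℕ) :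
    H.map (powMonoidHom n) ≤ H := by
  rintro _ ⟨t, ht, rfl⟩
  exact pow_mem ht n

theorem stmt_17_general (p : ℕ) (hp : p.Prime)
    (H : Subgroup (Fin (p - 1) → Circle)) :
    Module.finrank ℝ (fixU p hp.one_lt (p : ℤ) H) =
        Module.finrank ℝ (fixU p hp.one_lt 1 (H.map (powMonoidHom p)))
    ∧ Module.finrank ℝ (fixU p hp.one_lt 1 (H.map (powMonoidHom p))) ≥
        Module.finrank ℝ (fixU p hp.one_lt 1 H)
    ∧ Module.finrank ℝ (fixU p hp.one_lt 1 H) ≤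
        Module.finrank ℝ (fixU p hp.one_lt (p : ℤ) H) := by
  have hpow := fixU_natCast hp.one_lt p H
  have hmono : Module.finrank ℝ (fixU p hp.one_lt 1 H) ≤
      Module.finrank ℝ (fixU p hp.one_lt 1 (H.map (powMonoidHom p))) :=
    Submodule.finrank_mono (fixU_antitone hp.one_lt 1 (H.map_powMonoidHom_le p))
  exact ⟨by rw [hpow], hmono, hpow ▸ hmono⟩

/-- Let `p` be a prime and `H` a nontrivial closed subgroup of
`T^{p-1} ≤ Γ_p`.  Then `dim_ℝ U_1^H ≤ dim_ℝ U_p^H`; more specifically,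
`dim_ℝ U_p^H = dim_ℝ U_1^{H^p} ≥ dim_ℝ U_1^H`, where `H^p = {t^p : t ∈ H}`. -/
theorem stmt_17 (p : ℕ) (hp : p.Prime)
    (H : Subgroup (Fin (p - 1) → Circle)) (hne : H ≠ ⊥)
    (hclosed : IsClosed (H : Set (Fin (p - 1) → Circle))) :
    Module.finrank ℝ (fixU p hp.one_lt (p : ℤ) H) =
        Module.finrank ℝ (fixU p hp.one_lt 1 (H.map (powMonoidHom p)))
    ∧ Module.finrank ℝ (fixU p hp.one_lt 1 (H.map (powMonoidHom p))) ≥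
        Module.finrank ℝ (fixU p hp.one_lt 1 H)
    ∧ Module.finrank ℝ (fixU p hp.one_lt 1 H) ≤
        Module.finrank ℝ (fixU p hp.one_lt (p : ℤ) H) :=
  stmt_17_general p hp H
end

section
/- Let p be a prime and k ≥ 1. The kernel of the Γ_p-representation U_k (the set of elements acting trivially) equals (ℤ_k)^{p-1} ≤ T^{p-1}, where ℤ_k ≤ S^1 is the cyclic group of k-th roots of unity. In particular the centre Z(Γ_p) = ⟨(ξ_p, ..., ξ_p^{p-1})⟩ is contained in Ker U_p. -/
lemma chiU_ker_eq (p : ℕ) (hp : 1 < p) (k : ℤ) :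
    {t : Fin (p - 1) → Circle | ∀ i : Fin p, chiU p hp k i t = 1} =
      {t : Fin (p - 1) → Circle | ∀ j : Fin (p - 1), (t j) ^ k = 1} := by
  ext t
  simp only [Set.mem_setOf_eq]
  constructor
  · intro h
    have main : ∀ n, ∀ hn : n < p - 1, t ⟨n, hn⟩ ^ k = 1 := by
      intro n
      induction n using Nat.strong_induction_on with
      | _ n ih =>
        intro hn
        rcases Nat.eq_zero_or_pos n with h0 | h0
        · subst h0
          have := h ⟨0, by omega⟩
          simpa [chiU] using this
        · have hi := h ⟨n, by omega⟩
          simp only [chiU] at hi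
          rw [dif_neg (by omega), dif_neg (by omega)] at hi
          rw [zpow_neg, inv_mul_eq_one] at hi
          have h1 : t ⟨n - 1, by omega⟩ ^ k = 1 := ih (n - 1) (by omega) (by omega)
          exact hi.symm.trans h1
    intro j
    have := main j j.isLt
    simpa using this
  · intro h i
    simp only [chiU]
    split_ifs with h0 hl
    · exact h _
    · rw [zpow_neg, h _, inv_one]
    · rw [zpow_neg, h _, h _, inv_one, one_mul]

lemma circle_exp_pow (x : ℝ) (n : ℕ) : Circle.exp x ^ n = Circle.exp (n * x) := by
  induction n with
  | zero => simp [Circle.exp_zero]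
  | succ m ih =>
    rw [pow_succ, ih, ← Circle.exp_add]
    push_cast
    ring_nf

open Real in
/-- Let `p` be a prime and `k ≥ 1`.  The kernel of the `Γ_p`-representation
`U_k` restricted to the torus — the set of `t ∈ T^{p-1}` acting trivially on every
coordinate of `U_k`, i.e. with all characters `chiU p _ k i` trivial on `t` — equals
`(ℤ_k)^{p-1} = {t : ∀ j, t_j^k = 1}`, where `ℤ_k ≤ S¹` is the group of `k`-th roots of
unity.  In particular the centre `Z(Γ_p) = ⟨(ξ_p, ξ_p², …, ξ_p^{p-1})⟩` (with
`ξ_p = Circle.exp (2π/p)`) is contained in `Ker U_p`. -/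
theorem stmt_18 (p : ℕ) (hp : p.Prime) (k : ℕ) (hk : 1 ≤ k) :
    {t : Fin (p - 1) → Circle | ∀ i : Fin p, chiU p hp.one_lt (k : ℤ) i t = 1} =
        {t : Fin (p - 1) → Circle | ∀ j : Fin (p - 1), (t j) ^ (k : ℤ) = 1}
    ∧ (Subgroup.zpowers
          (fun j : Fin (p - 1) => (Circle.exp (2 * π / p)) ^ ((j : ℕ) + 1)) : Set _) ⊆
        {t : Fin (p - 1) → Circle | ∀ i : Fin p, chiU p hp.one_lt (p : ℤ) i t = 1} := by
  refine ⟨chiU_ker_eq p hp.one_lt (k : ℤ), ?_⟩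
  rw [chiU_ker_eq p hp.one_lt (p : ℤ)]
  rintro x ⟨n, rfl⟩ j
  simp only [Set.mem_setOf_eq, Pi.pow_apply]
  have hxi : Circle.exp (2 * π / p) ^ p = 1 := by
    rw [circle_exp_pow]
    have hp0 : (p : ℝ) ≠ 0 := Nat.cast_ne_zero.mpr hp.pos.ne'
    have : (p : ℝ) * (2 * π / p) = 2 * π := by field_simp
    rw [this, Circle.exp_two_pi]
  have : ((Circle.exp (2 * π / p) ^ ((j : ℕ) + 1)) ^ n) ^ (p : ℤ)
      = ((Circle.exp (2 * π / p) ^ p) ^ ((j : ℕ) + 1)) ^ n := by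
    group
  rw [this, hxi, one_pow, one_zpow]
end
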